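/- Let X be a complex Banach space of dimension ≥ 2 and S a non-commutative semigroup of bounded operators with rank[S,T] ≤ 1 for all S,T ∈ S, and let [A,B] = y ⊗ φ with y, φ nonzero for some A,B ∈ S. Then the closed linear span M of {Sy : S ∈ S} ∪ {y} is a nonzero closed S-invariant subspace contained in ker φ; in particular M ≠ X. -/

import Mathlib

/-!
Write `f.smulRight v` for the rank-one operator `x ↦ f x • v` (the paper's `v ⊗ f`). If
`P, Q, R ∈ 𝒮`, `⁅P, Q⁆ = f₁.smulRight v₁` and `⁅R, P⁆ = f₂.smulRight v₂`, then
`⁅P, Q * R⁆ = (f₁ ∘ₗ R).smulRight v₁ - f₂.smulRight (Q v₂)` has rank at most one, so `Q v₂ ∥ v₁`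
or `f₁ ∘ₗ R ∥ f₂`. Applied to `P`, `Q` and their squares, these alternatives show that every
commutator `ψ.smulRight w` in `𝒮` is traceless, `ψ w = 0`; the trace of `⁅P, Q * R⁆` then gives
`f₁ (R v₁) = f₂ (Q v₂)`.

Given `⁅A, B⁆ = φ.smulRight y` and `S ∈ 𝒮`, write `⁅B, S⁆` and `⁅S, A⁆` as rank-one operators as
well. The three operators `P i * ⁅P (i + 1), P (i + 2)⁆` of the cyclic triangle `P = (A, B, S)`
then have a common trace `c = φ (S y)`. If `c ≠ 0`, the alternatives above and the Jacobi identity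
show that in each rotation of the triangle either `P 0, P 1` exchange the lines of `v 1, v 2`, or
their transposes exchange the lines of `f 1, f 2`, and that two consecutive rotations are never of
the same kind: impossible around a cycle of length three.
-/

open Submodule

section

variable {K V : Type*} [Field K] [AddCommGroup V] [Module K V]

namespace LinearMap

theorem exists_eq_smulRight_of_rank_le_one {W : Type*} [AddCommGroup W] [Module K W]
    {T : V →ₗ[K] W} (h : T.rank ≤ 1) : ∃ (f : Module.Dual K V) (w : W), T = f.smulRight w := by
  obtain ⟨w, hw⟩ := rank_le_one_iff.mp h
  have hT (x : V) : ∃ r : K, r • (w : W) = T x := by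
    obtain ⟨r, hr⟩ := hw ⟨T x, mem_range_self T x⟩
    exact ⟨r, congrArg Subtype.val hr⟩
  generalize (w : W) = w at hT
  by_cases hw0 : w = 0
  · refine ⟨0, 0, ext fun x => ?_⟩
    obtain ⟨r, hr⟩ := hT x
    simp [← hr, hw0]
  obtain ⟨g, hg⟩ : ∃ g : Module.Dual K W, g w ≠ 0 := by
    by_contra! h
    exact hw0 ((Module.forall_dual_apply_eq_zero_iff K w).mp h)
  refine ⟨(g w)⁻¹ • g ∘ₗ T, w, ext fun x => ?_⟩
  obtain ⟨r, hr⟩ := hT x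
  simp [← hr, mul_comm r, inv_mul_cancel_left₀ hg]

theorem sum_apply_eq_zero_of_sum_smulRight_eq_zero {ι : Type*} [Fintype ι]
    (f : ι → Module.Dual K V) (v : ι → V) (h : ∑ i, (f i).smulRight (v i) = 0) :
    ∑ i, f i (v i) = 0 := by
  set U := span K (Set.range v)
  have : Module.Finite K U := FiniteDimensional.span_of_finite K (Set.finite_range v)
  have hv (i : ι) : v i ∈ U := subset_span ⟨i, rfl⟩
  have hU : ∑ i, (f i ∘ₗ U.subtype).smulRight (⟨v i, hv i⟩ : U) = 0 := by
    ext x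
    simpa using congr($h x)
  simpa using congr(LinearMap.trace K U $hU)

theorem mem_span_or_mem_span_of_rank_add_le_one {f₁ f₂ : Module.Dual K V} {v₁ v₂ : V}
    (h : (f₁.smulRight v₁ + f₂.smulRight v₂).rank ≤ 1) (hv₁ : v₁ ≠ 0) (hf₂ : f₂ ≠ 0) :
    v₂ ∈ K ∙ v₁ ∨ f₁ ∈ K ∙ f₂ := by
  refine or_iff_not_imp_left.mpr fun hv => ?_
  have hind : LinearIndependent K ![v₁, v₂] :=
    (LinearIndependent.pair_iff' hv₁).mpr fun a ha => hv (mem_span_singleton.mpr ⟨a, ha⟩)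
  obtain ⟨x₀, hx₀⟩ : ∃ x₀, f₂ x₀ ≠ 0 := by
    by_contra! H
    exact hf₂ (ext H)
  obtain ⟨g, w, hgw⟩ := exists_eq_smulRight_of_rank_le_one h
  have hT (x : V) : f₁ x • v₁ + f₂ x • v₂ = g x • w := by simpa using congr($hgw x)
  have hcoef (x : V) := LinearIndependent.pair_iff.mp hind (g x₀ * f₁ x - g x * f₁ x₀)
    (g x₀ * f₂ x - g x * f₂ x₀) (by linear_combination (norm := module) g x₀ • hT x - g x • hT x₀)
  have hg : g x₀ ≠ 0 := fun h0 =>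
    hx₀ (LinearIndependent.pair_iff.mp hind _ _ (by simpa [h0] using hT x₀)).2
  refine mem_span_singleton.mpr ⟨f₁ x₀ / f₂ x₀, ext fun x => ?_⟩
  rw [smul_apply, smul_eq_mul, div_mul_eq_mul_div, div_eq_iff hx₀]
  apply mul_left_cancel₀ hg
  linear_combination f₁ x₀ * (hcoef x).2 - f₂ x₀ * (hcoef x).1

end LinearMap

namespace Module.End

variable {P Q R : Module.End K V} {f₁ f₂ ψ : Module.Dual K V} {v₁ v₂ w : V}

theorem mul_smulRight (T : Module.End K V) (f : Module.Dual K V) (v : V) :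
    T * f.smulRight v = f.smulRight (T v) := by
  ext; simp

theorem smulRight_mul (f : Module.Dual K V) (v : V) (T : Module.End K V) :
    f.smulRight v * T = (f ∘ₗ T).smulRight v := by
  ext; simp

theorem lie_eq_neg_smulRight (h : ⁅P, Q⁆ = ψ.smulRight w) : ⁅Q, P⁆ = (-ψ).smulRight w := by
  rw [show ⁅Q, P⁆ = -⁅P, Q⁆ by simp only [Ring.lie_def]; abel, h]
  ext; simp

theorem lie_mul_eq (hPQ : ⁅P, Q⁆ = f₁.smulRight v₁) (hRP : ⁅R, P⁆ = f₂.smulRight v₂) :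
    ⁅P, Q * R⁆ = (f₁ ∘ₗ R).smulRight v₁ - f₂.smulRight (Q v₂) := by
  have : ⁅P, Q * R⁆ = ⁅P, Q⁆ * R - Q * ⁅R, P⁆ := by
    simp only [Ring.lie_def]; noncomm_ring
  rw [this, hPQ, hRP, smulRight_mul, mul_smulRight]

theorem apply_eq_zero_of_lie_eq_of_mem_span (h : ⁅P, Q⁆ = ψ.smulRight w) (hP : P w ∈ K ∙ w)
    (hQ : Q w ∈ K ∙ w) : ψ w = 0 := by
  obtain ⟨a, ha⟩ := mem_span_singleton.mp hP
  obtain ⟨b, hb⟩ := mem_span_singleton.mp hQ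
  have hw : ψ w • w = 0 := by
    have := congr($h w)
    simp only [Ring.lie_def, LinearMap.sub_apply, mul_apply, LinearMap.smulRight_apply, ← ha, ← hb,
      map_smul, smul_smul] at this
    rw [← this, mul_comm, sub_self]
  rcases smul_eq_zero.mp hw with h0 | h0
  · exact h0
  · simp [h0]

theorem apply_eq_zero_of_lie_eq_of_comp_mem_span (h : ⁅P, Q⁆ = ψ.smulRight w)
    (hP : ψ ∘ₗ P ∈ K ∙ ψ) (hQ : ψ ∘ₗ Q ∈ K ∙ ψ) : ψ w = 0 := by
  obtain ⟨a, ha⟩ := mem_span_singleton.mp hP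
  obtain ⟨b, hb⟩ := mem_span_singleton.mp hQ
  have hPx (x : V) : ψ (P x) = a * ψ x := by simpa using congr($ha x).symm
  have hQx (x : V) : ψ (Q x) = b * ψ x := by simpa using congr($hb x).symm
  have := congr(ψ ($h w))
  simp only [Ring.lie_def, LinearMap.sub_apply, mul_apply, LinearMap.smulRight_apply, map_sub,
    map_smul, hPx, hQx, smul_eq_mul] at this
  exact mul_self_eq_zero.mp (by linear_combination -this)

theorem comp_mem_span_of_comp_mem_span (h : ⁅P, Q⁆ = ψ.smulRight w) (hc : ψ w ≠ 0)
    (hψQ : ψ ∘ₗ Q ∈ K ∙ ψ) {α : K} (hχQ : (α • ψ + ψ ∘ₗ P) ∘ₗ Q ∈ K ∙ (α • ψ + ψ ∘ₗ P)) :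
    ψ ∘ₗ P ∈ K ∙ ψ := by
  obtain ⟨μ, hμ⟩ := mem_span_singleton.mp hψQ
  obtain ⟨l, hl⟩ := mem_span_singleton.mp hχQ
  have hQx (x : V) : ψ (Q x) = μ * ψ x := by simpa using congr($hμ x).symm
  have hPQx (x : V) : ψ (P (Q x)) = μ * ψ (P x) + ψ x * ψ w := by
    have := congr(ψ ($h x))
    simp only [Ring.lie_def, LinearMap.sub_apply, mul_apply, LinearMap.smulRight_apply, map_sub,
      map_smul, smul_eq_mul, hQx] at this
    linear_combination this
  -- `(α • ψ + ψ ∘ₗ P) ∘ₗ Q = μ • (α • ψ + ψ ∘ₗ P) + ψ w • ψ`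
  have hlx (x : V) : (l - μ) * (α * ψ x + ψ (P x)) = ψ w * ψ x := by
    have := congr($hl x)
    simp only [LinearMap.smul_apply, LinearMap.add_apply, LinearMap.comp_apply, smul_eq_mul, hQx,
      hPQx] at this
    linear_combination this
  have hm : l - μ ≠ 0 := by
    intro hm
    have := hlx w
    rw [hm, zero_mul, eq_comm] at this
    exact hc (mul_self_eq_zero.mp this)
  refine mem_span_singleton.mpr ⟨ψ w / (l - μ) - α, LinearMap.ext fun x => ?_⟩
  have := hlx x
  simp only [LinearMap.smul_apply, LinearMap.comp_apply, smul_eq_mul]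
  field_simp
  linear_combination -this

end Module.End

structure IsRankOneCommutatorSemigroup (𝒮 : Set (Module.End K V)) : Prop where
  mul_mem {P Q : Module.End K V} : P ∈ 𝒮 → Q ∈ 𝒮 → P * Q ∈ 𝒮
  rank_lie_le_one {P Q : Module.End K V} : P ∈ 𝒮 → Q ∈ 𝒮 → LinearMap.rank ⁅P, Q⁆ ≤ 1

namespace IsRankOneCommutatorSemigroup

open Module.End

variable {𝒮 : Set (Module.End K V)} {P Q R : Module.End K V} {f₁ f₂ ψ : Module.Dual K V}
  {v₁ v₂ w : V}

theorem mem_span_or_comp_mem_span (h𝒮 : IsRankOneCommutatorSemigroup 𝒮) (hP : P ∈ 𝒮)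
    (hQ : Q ∈ 𝒮) (hR : R ∈ 𝒮) (hPQ : ⁅P, Q⁆ = f₁.smulRight v₁) (hRP : ⁅R, P⁆ = f₂.smulRight v₂)
    (hv₁ : v₁ ≠ 0) (hf₂ : f₂ ≠ 0) : Q v₂ ∈ K ∙ v₁ ∨ f₁ ∘ₗ R ∈ K ∙ f₂ := by
  have h := h𝒮.rank_lie_le_one hP (h𝒮.mul_mem hQ hR)
  rw [lie_mul_eq hPQ hRP, sub_eq_add_neg,
    show -f₂.smulRight (Q v₂) = f₂.smulRight (-Q v₂) by ext; simp] at h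
  simpa using LinearMap.mem_span_or_mem_span_of_rank_add_le_one h hv₁ hf₂

theorem mem_span_or_comp_mem_span' (h𝒮 : IsRankOneCommutatorSemigroup 𝒮) (hP : P ∈ 𝒮)
    (hQ : Q ∈ 𝒮) (hR : R ∈ 𝒮) (hPQ : ⁅P, Q⁆ = f₁.smulRight v₁) (hRP : ⁅R, P⁆ = f₂.smulRight v₂)
    (hv₂ : v₂ ≠ 0) (hf₁ : f₁ ≠ 0) : R v₁ ∈ K ∙ v₂ ∨ f₂ ∘ₗ Q ∈ K ∙ f₁ := by
  simpa [← Set.neg_singleton, span_neg] using h𝒮.mem_span_or_comp_mem_span hP hR hQ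
    (lie_eq_neg_smulRight hRP) (lie_eq_neg_smulRight hPQ) hv₂ (neg_ne_zero.mpr hf₁)

theorem apply_eq_zero_of_mem_span_of_comp_mem_span (h𝒮 : IsRankOneCommutatorSemigroup 𝒮)
    (hP : P ∈ 𝒮) (hQ : Q ∈ 𝒮) (h : ⁅P, Q⁆ = ψ.smulRight w) (hPw : P w ∈ K ∙ w)
    (hψQ : ψ ∘ₗ Q ∈ K ∙ ψ) : ψ w = 0 := by
  by_contra hc
  obtain ⟨α, hα⟩ := mem_span_singleton.mp hPw
  set χ := α • ψ + ψ ∘ₗ P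
  have hP2 : ⁅P * P, Q⁆ = χ.smulRight w := by
    rw [show ⁅P * P, Q⁆ = P * ⁅P, Q⁆ + ⁅P, Q⁆ * P by simp only [Ring.lie_def]; noncomm_ring, h,
      mul_smulRight, smulRight_mul, ← hα]
    ext; simp [χ, add_smul, smul_smul, mul_comm]
  suffices hψP : ψ ∘ₗ P ∈ K ∙ ψ from
    hc (apply_eq_zero_of_lie_eq_of_comp_mem_span h hψP hψQ)
  have hw : w ≠ 0 := by rintro rfl; simp at hc
  by_cases hχ : χ = 0
  · exact mem_span_singleton.mpr ⟨-α, by rw [neg_smul, neg_eq_iff_add_eq_zero]; exact hχ⟩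
  rcases h𝒮.mem_span_or_comp_mem_span (h𝒮.mul_mem hP hP) hQ hQ hP2 (lie_eq_neg_smulRight hP2) hw
    (neg_ne_zero.mpr hχ) with hQw | hχQ
  · exact absurd (apply_eq_zero_of_lie_eq_of_mem_span h hPw hQw) hc
  · exact comp_mem_span_of_comp_mem_span h hc hψQ
      (by simpa [← Set.neg_singleton, span_neg] using hχQ)

theorem apply_eq_zero_of_lie_eq (h𝒮 : IsRankOneCommutatorSemigroup 𝒮) (hP : P ∈ 𝒮) (hQ : Q ∈ 𝒮)
    (h : ⁅P, Q⁆ = ψ.smulRight w) : ψ w = 0 := by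
  by_contra hc
  have hw : w ≠ 0 := by rintro rfl; simp at hc
  have hψ : ψ ≠ 0 := by rintro rfl; simp at hc
  have h' := lie_eq_neg_smulRight h
  rcases h𝒮.mem_span_or_comp_mem_span hP hQ hQ h h' hw (neg_ne_zero.mpr hψ) with hQw | hψQ <;>
    rcases h𝒮.mem_span_or_comp_mem_span hQ hP hP h' h hw hψ with hPw | hψP
  · exact hc (apply_eq_zero_of_lie_eq_of_mem_span h hPw hQw)
  · refine hc (neg_eq_zero.mp ?_)
    exact h𝒮.apply_eq_zero_of_mem_span_of_comp_mem_span hQ hP h' hQw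
      (by simpa [← Set.neg_singleton, span_neg] using hψP)
  · refine hc (h𝒮.apply_eq_zero_of_mem_span_of_comp_mem_span hP hQ h hPw ?_)
    simpa [← Set.neg_singleton, span_neg] using hψQ
  · refine hc (apply_eq_zero_of_lie_eq_of_comp_mem_span h ?_ ?_)
    · simpa [LinearMap.neg_comp] using hψP
    · simpa [← Set.neg_singleton, span_neg] using hψQ

theorem apply_apply_eq (h𝒮 : IsRankOneCommutatorSemigroup 𝒮) (hP : P ∈ 𝒮) (hQ : Q ∈ 𝒮)
    (hR : R ∈ 𝒮) (hPQ : ⁅P, Q⁆ = f₁.smulRight v₁) (hRP : ⁅R, P⁆ = f₂.smulRight v₂) :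
    f₁ (R v₁) = f₂ (Q v₂) := by
  obtain ⟨ψ, w, h⟩ := LinearMap.exists_eq_smulRight_of_rank_le_one
    (h𝒮.rank_lie_le_one hP (h𝒮.mul_mem hQ hR))
  have hψ := h𝒮.apply_eq_zero_of_lie_eq hP (h𝒮.mul_mem hQ hR) h
  rw [lie_mul_eq hPQ hRP] at h
  have := LinearMap.sum_apply_eq_zero_of_sum_smulRight_eq_zero ![f₁ ∘ₗ R, -f₂, -ψ] ![v₁, Q v₂, w]
    (by ext x; simpa [Fin.sum_univ_three, ← sub_eq_add_neg, sub_eq_zero] using congr($h x))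
  simp [Fin.sum_univ_three] at this
  linear_combination this + hψ

end IsRankOneCommutatorSemigroup

structure CommutatorTriangle (𝒮 : Set (Module.End K V)) where
  P : Fin 3 → Module.End K V
  v : Fin 3 → V
  f : Fin 3 → Module.Dual K V
  mem (i : Fin 3) : P i ∈ 𝒮
  lie_eq (i : Fin 3) : ⁅P i, P (i + 1)⁆ = (f i).smulRight (v i)

namespace CommutatorTriangle

variable {𝒮 : Set (Module.End K V)} (t : CommutatorTriangle 𝒮) {c : K}

def rotate : CommutatorTriangle 𝒮 where
  P i := t.P (i + 1)
  v i := t.v (i + 1)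
  f i := t.f (i + 1)
  mem i := t.mem (i + 1)
  lie_eq i := t.lie_eq (i + 1)

/-- `c` is the trace of each of the three operators `P i * ⁅P (i + 1), P (i + 2)⁆`. -/
def HasTrace (c : K) : Prop :=
  ∀ i, t.f (i + 1) (t.P i (t.v (i + 1))) = c

theorem HasTrace.rotate {t : CommutatorTriangle 𝒮} (hτ : t.HasTrace c) : t.rotate.HasTrace c :=
  fun i => hτ (i + 1)

def ExchangesVectors : Prop :=
  t.P 0 (t.v 1) ∈ K ∙ t.v 2 ∧ t.P 1 (t.v 2) ∈ K ∙ t.v 1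

def ExchangesFunctionals : Prop :=
  t.f 2 ∘ₗ t.P 1 ∈ K ∙ t.f 1 ∧ t.f 1 ∘ₗ t.P 0 ∈ K ∙ t.f 2

theorem jacobi_apply (x : V) :
    (t.f 1 x • t.P 0 (t.v 1) - t.f 1 (t.P 0 x) • t.v 1) +
      (t.f 2 x • t.P 1 (t.v 2) - t.f 2 (t.P 1 x) • t.v 2) +
      (t.f 0 x • t.P 2 (t.v 0) - t.f 0 (t.P 2 x) • t.v 0) = 0 := by
  have jacobi :
      ⁅t.P 0, ⁅t.P 1, t.P 2⁆⁆ + ⁅t.P 1, ⁅t.P 2, t.P 0⁆⁆ + ⁅t.P 2, ⁅t.P 0, t.P 1⁆⁆ = 0 := by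
    simp only [Ring.lie_def]; noncomm_ring
  rw [show ⁅t.P 1, t.P 2⁆ = _ from t.lie_eq 1, show ⁅t.P 2, t.P 0⁆ = _ from t.lie_eq 2,
    show ⁅t.P 0, t.P 1⁆ = _ from t.lie_eq 0] at jacobi
  simpa [Ring.lie_def] using congr($jacobi x)

theorem apply_self_eq_zero (h𝒮 : IsRankOneCommutatorSemigroup 𝒮) (i : Fin 3) :
    t.f i (t.v i) = 0 :=
  h𝒮.apply_eq_zero_of_lie_eq (t.mem i) (t.mem (i + 1)) (t.lie_eq i)

theorem apply_apply_eq (h𝒮 : IsRankOneCommutatorSemigroup 𝒮) :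
    t.f 2 (t.P 1 (t.v 2)) = t.f 1 (t.P 0 (t.v 1)) :=
  h𝒮.apply_apply_eq (t.mem 2) (t.mem 0) (t.mem 1) (t.lie_eq 2) (t.lie_eq 1)

theorem hasTrace (h𝒮 : IsRankOneCommutatorSemigroup 𝒮) :
    t.HasTrace (t.f 1 (t.P 0 (t.v 1))) := by
  intro i
  fin_cases i
  · rfl
  · exact t.apply_apply_eq h𝒮
  · exact (t.rotate.apply_apply_eq h𝒮).trans (t.apply_apply_eq h𝒮)

theorem v_ne_zero (hc : c ≠ 0) (hτ : t.HasTrace c) (i : Fin 3) : t.v i ≠ 0 :=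
  fun h => hc (by simpa [add_assoc, h] using (hτ (i + 2)).symm)

theorem f_ne_zero (hc : c ≠ 0) (hτ : t.HasTrace c) (i : Fin 3) : t.f i ≠ 0 :=
  fun h => hc (by simpa [add_assoc, h] using (hτ (i + 2)).symm)

theorem mem_span_or_mem_span (h𝒮 : IsRankOneCommutatorSemigroup 𝒮) (hc : c ≠ 0)
    (hτ : t.HasTrace c) :
    (t.P 0 (t.v 1) ∈ K ∙ t.v 2 ∨ t.f 2 ∘ₗ t.P 1 ∈ K ∙ t.f 1) ∧
      (t.P 1 (t.v 2) ∈ K ∙ t.v 1 ∨ t.f 1 ∘ₗ t.P 0 ∈ K ∙ t.f 2) :=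
  ⟨h𝒮.mem_span_or_comp_mem_span (t.mem 2) (t.mem 0) (t.mem 1) (t.lie_eq 2) (t.lie_eq 1)
      (t.v_ne_zero hc hτ 2) (t.f_ne_zero hc hτ 1),
    h𝒮.mem_span_or_comp_mem_span' (t.mem 2) (t.mem 0) (t.mem 1) (t.lie_eq 2) (t.lie_eq 1)
      (t.v_ne_zero hc hτ 1) (t.f_ne_zero hc hτ 2)⟩

theorem apply_ne_zero (h𝒮 : IsRankOneCommutatorSemigroup 𝒮) (hc : c ≠ 0) (hτ : t.HasTrace c) :
    t.f 1 (t.v 2) ≠ 0 ∧ t.f 2 (t.v 1) ≠ 0 := by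
  have τ₀ : t.f 1 (t.P 0 (t.v 1)) = c := hτ 0
  have τ₁ : t.f 2 (t.P 1 (t.v 2)) = c := hτ 1
  obtain ⟨h₁, h₂⟩ := t.mem_span_or_mem_span h𝒮 hc hτ
  constructor <;> intro h0 <;> apply hc
  · rcases h₁ with h | h <;> obtain ⟨a, ha⟩ := mem_span_singleton.mp h
    · rw [← τ₀, ← ha, map_smul, h0, smul_zero]
    · rw [← τ₁, ← LinearMap.comp_apply, ← ha, LinearMap.smul_apply, h0, smul_zero]
  · rcases h₂ with h | h <;> obtain ⟨a, ha⟩ := mem_span_singleton.mp h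
    · rw [← τ₁, ← ha, map_smul, h0, smul_zero]
    · rw [← τ₀, ← LinearMap.comp_apply, ← ha, LinearMap.smul_apply, h0, smul_zero]

theorem apply_ne_zero_of_ne (h𝒮 : IsRankOneCommutatorSemigroup 𝒮) (hc : c ≠ 0)
    (hτ : t.HasTrace c) {i j : Fin 3} (hij : i ≠ j) : t.f i (t.v j) ≠ 0 := by
  have h₀ := t.apply_ne_zero h𝒮 hc hτ
  have h₁ := t.rotate.apply_ne_zero h𝒮 hc hτ.rotate
  have h₂ := t.rotate.rotate.apply_ne_zero h𝒮 hc hτ.rotate.rotate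
  fin_cases i <;> fin_cases j
  all_goals first
    | exact absurd rfl hij
    | exact h₀.1 | exact h₀.2 | exact h₁.1 | exact h₁.2 | exact h₂.1 | exact h₂.2

theorem eq_zero_of_mem_span_v (h𝒮 : IsRankOneCommutatorSemigroup 𝒮) (hc : c ≠ 0)
    (hτ : t.HasTrace c) {i j : Fin 3} (hij : i ≠ j) {x : V} (hi : x ∈ K ∙ t.v i)
    (hj : x ∈ K ∙ t.v j) : x = 0 := by
  obtain ⟨a, rfl⟩ := mem_span_singleton.mp hi
  obtain ⟨b, hb⟩ := mem_span_singleton.mp hj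
  have : b * t.f i (t.v j) = 0 := by simpa [t.apply_self_eq_zero h𝒮] using congr(t.f i $hb)
  rw [← hb, (mul_eq_zero.mp this).resolve_right (t.apply_ne_zero_of_ne h𝒮 hc hτ hij), zero_smul]

theorem eq_zero_of_mem_span_f (h𝒮 : IsRankOneCommutatorSemigroup 𝒮) (hc : c ≠ 0)
    (hτ : t.HasTrace c) {i j : Fin 3} (hij : i ≠ j) {g : Module.Dual K V} (hi : g ∈ K ∙ t.f i)
    (hj : g ∈ K ∙ t.f j) : g = 0 := by
  obtain ⟨a, rfl⟩ := mem_span_singleton.mp hi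
  obtain ⟨b, hb⟩ := mem_span_singleton.mp hj
  have : b * t.f j (t.v i) = 0 := by simpa [t.apply_self_eq_zero h𝒮] using congr($hb (t.v i))
  rw [← hb, (mul_eq_zero.mp this).resolve_right (t.apply_ne_zero_of_ne h𝒮 hc hτ hij.symm),
    zero_smul]

theorem not_exchangesVectors_and_rotate (h𝒮 : IsRankOneCommutatorSemigroup 𝒮) (hc : c ≠ 0)
    (hτ : t.HasTrace c) : ¬ (t.ExchangesVectors ∧ t.rotate.ExchangesVectors) := by
  rintro ⟨⟨-, h₁⟩, h₀, -⟩
  have τ₁ : t.f 2 (t.P 1 (t.v 2)) = c := hτ 1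
  rw [t.eq_zero_of_mem_span_v h𝒮 hc hτ (by decide : (1 : Fin 3) ≠ 0) h₁ h₀, map_zero] at τ₁
  exact hc τ₁.symm

theorem not_exchangesFunctionals_and_rotate (h𝒮 : IsRankOneCommutatorSemigroup 𝒮) (hc : c ≠ 0)
    (hτ : t.HasTrace c) : ¬ (t.ExchangesFunctionals ∧ t.rotate.ExchangesFunctionals) := by
  rintro ⟨⟨h₁, -⟩, -, h₀⟩
  have τ₁ : (t.f 2 ∘ₗ t.P 1) (t.v 2) = c := hτ 1
  rw [t.eq_zero_of_mem_span_f h𝒮 hc hτ (by decide : (1 : Fin 3) ≠ 0) h₁ h₀,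
    LinearMap.zero_apply] at τ₁
  exact hc τ₁.symm

theorem comp_not_mem_span_of_mem_span (h𝒮 : IsRankOneCommutatorSemigroup 𝒮) (hc : c ≠ 0)
    (hτ : t.HasTrace c) (hv : t.P 0 (t.v 1) ∈ K ∙ t.v 2) : t.f 1 ∘ₗ t.P 0 ∉ K ∙ t.f 2 := by
  intro hf
  obtain ⟨a, ha⟩ := mem_span_singleton.mp hv
  obtain ⟨b, hb⟩ := mem_span_singleton.mp hf
  have τ₀ : a * t.f 1 (t.v 2) = c := by simpa [← ha] using hτ 0
  have τ₁ : t.f 2 (t.P 1 (t.v 2)) = c := hτ 1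
  have τ₂ : t.f 0 (t.P 2 (t.v 0)) = c := hτ 2
  have hb₂ : t.f 1 (t.P 0 (t.v 2)) = 0 := by
    simpa [t.apply_self_eq_zero h𝒮] using congr($hb (t.v 2)).symm
  have hJ := congr(t.f 0 $(t.jacobi_apply (t.v 2)))
  simp only [map_add, map_sub, map_smul, smul_eq_mul, ← ha, hb₂, τ₁, τ₂,
    t.apply_self_eq_zero h𝒮, map_zero] at hJ
  refine t.apply_ne_zero_of_ne h𝒮 hc hτ (by decide : (0 : Fin 3) ≠ 2)
    ((mul_eq_zero.mp ?_).resolve_right hc)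
  linear_combination hJ - t.f 0 (t.v 2) * τ₀

theorem comp_not_mem_span_of_mem_span' (h𝒮 : IsRankOneCommutatorSemigroup 𝒮) (hc : c ≠ 0)
    (hτ : t.HasTrace c) (hv : t.P 1 (t.v 2) ∈ K ∙ t.v 1) : t.f 2 ∘ₗ t.P 1 ∉ K ∙ t.f 1 := by
  intro hf
  obtain ⟨a, ha⟩ := mem_span_singleton.mp hv
  obtain ⟨b, hb⟩ := mem_span_singleton.mp hf
  have τ₀ : t.f 1 (t.P 0 (t.v 1)) = c := hτ 0
  have τ₁ : a * t.f 2 (t.v 1) = c := by simpa [← ha] using hτ 1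
  have τ₂ : t.f 0 (t.P 2 (t.v 0)) = c := hτ 2
  have hb₁ : t.f 2 (t.P 1 (t.v 1)) = 0 := by
    simpa [t.apply_self_eq_zero h𝒮] using congr($hb (t.v 1)).symm
  have hJ := congr(t.f 0 $(t.jacobi_apply (t.v 1)))
  simp only [map_add, map_sub, map_smul, smul_eq_mul, ← ha, hb₁, τ₀, τ₂,
    t.apply_self_eq_zero h𝒮, map_zero] at hJ
  refine t.apply_ne_zero_of_ne h𝒮 hc hτ (by decide : (0 : Fin 3) ≠ 1)
    ((mul_eq_zero.mp ?_).resolve_right hc)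
  linear_combination hJ - t.f 0 (t.v 1) * τ₁

theorem exchangesVectors_or_exchangesFunctionals (h𝒮 : IsRankOneCommutatorSemigroup 𝒮)
    (hc : c ≠ 0) (hτ : t.HasTrace c) : t.ExchangesVectors ∨ t.ExchangesFunctionals := by
  have := t.mem_span_or_mem_span h𝒮 hc hτ
  have := t.comp_not_mem_span_of_mem_span h𝒮 hc hτ
  have := t.comp_not_mem_span_of_mem_span' h𝒮 hc hτ
  unfold ExchangesVectors ExchangesFunctionals
  tauto

theorem hasTrace_zero (h𝒮 : IsRankOneCommutatorSemigroup 𝒮) : t.HasTrace 0 := by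
  have hτ := t.hasTrace h𝒮
  suffices hc : t.f 1 (t.P 0 (t.v 1)) = 0 from hc ▸ hτ
  by_contra hc
  -- the ascriptions below use that `t.rotate.rotate.rotate` unfolds to `t`
  have := t.exchangesVectors_or_exchangesFunctionals h𝒮 hc hτ
  have := t.rotate.exchangesVectors_or_exchangesFunctionals h𝒮 hc hτ.rotate
  have := t.rotate.rotate.exchangesVectors_or_exchangesFunctionals h𝒮 hc hτ.rotate.rotate
  have := t.not_exchangesVectors_and_rotate h𝒮 hc hτ
  have := t.rotate.not_exchangesVectors_and_rotate h𝒮 hc hτ.rotate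
  have : ¬ (t.rotate.rotate.ExchangesVectors ∧ t.ExchangesVectors) :=
    t.rotate.rotate.not_exchangesVectors_and_rotate h𝒮 hc hτ.rotate.rotate
  have := t.not_exchangesFunctionals_and_rotate h𝒮 hc hτ
  have := t.rotate.not_exchangesFunctionals_and_rotate h𝒮 hc hτ.rotate
  have : ¬ (t.rotate.rotate.ExchangesFunctionals ∧ t.ExchangesFunctionals) :=
    t.rotate.rotate.not_exchangesFunctionals_and_rotate h𝒮 hc hτ.rotate.rotate
  tauto

end CommutatorTriangle

theorem IsRankOneCommutatorSemigroup.apply_apply_eq_zero {𝒮 : Set (Module.End K V)}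
    (h𝒮 : IsRankOneCommutatorSemigroup 𝒮) {A B S : Module.End K V} (hA : A ∈ 𝒮) (hB : B ∈ 𝒮)
    (hS : S ∈ 𝒮) {φ : Module.Dual K V} {y : V} (h : ⁅A, B⁆ = φ.smulRight y) : φ (S y) = 0 := by
  obtain ⟨q, p, hBS⟩ := LinearMap.exists_eq_smulRight_of_rank_le_one (h𝒮.rank_lie_le_one hB hS)
  obtain ⟨g, u, hSA⟩ := LinearMap.exists_eq_smulRight_of_rank_le_one (h𝒮.rank_lie_le_one hS hA)
  let t : CommutatorTriangle 𝒮 :=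
    { P := ![A, B, S], v := ![y, p, u], f := ![φ, q, g]
      mem := by intro i; fin_cases i <;> assumption
      lie_eq := by intro i; fin_cases i <;> assumption }
  exact t.hasTrace_zero h𝒮 2

theorem Submodule.topologicalClosure_le_comap {R M : Type*} [Semiring R] [TopologicalSpace M]
    [AddCommMonoid M] [Module R M] [ContinuousConstSMul R M] [ContinuousAdd M]
    {N : Submodule R M} (T : M →L[R] M) (h : N ≤ N.comap (T : M →ₗ[R] M)) :
    N.topologicalClosure ≤ N.topologicalClosure.comap (T : M →ₗ[R] M) :=
  N.topologicalClosure_minimal (h.trans (comap_mono N.le_topologicalClosure))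
    (N.isClosed_topologicalClosure.preimage T.continuous)

theorem isRankOneCommutatorSemigroup_image_coe {X : Type*} [AddCommGroup X] [Module K X]
    [TopologicalSpace X] [IsTopologicalAddGroup X] {𝒮 : Set (X →L[K] X)}
    (hmul : ∀ S ∈ 𝒮, ∀ T ∈ 𝒮, S * T ∈ 𝒮)
    (hrank : ∀ S ∈ 𝒮, ∀ T ∈ 𝒮, LinearMap.rank ((S * T - T * S : X →L[K] X) : X →ₗ[K] X) ≤ 1) :
    IsRankOneCommutatorSemigroup ((↑) '' 𝒮 : Set (Module.End K X)) where
  mul_mem := by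
    rintro _ _ ⟨S, hS, rfl⟩ ⟨T, hT, rfl⟩
    exact ⟨S * T, hmul S hS T hT, rfl⟩
  rank_lie_le_one := by
    rintro _ _ ⟨S, hS, rfl⟩ ⟨T, hT, rfl⟩
    exact hrank S hS T hT

end

theorem stmt_10_general {X : Type*} [NormedAddCommGroup X] [NormedSpace ℂ X]
    (𝒮 : Set (X →L[ℂ] X)) (hmul : ∀ S ∈ 𝒮, ∀ T ∈ 𝒮, S * T ∈ 𝒮)
    (hrank : ∀ S ∈ 𝒮, ∀ T ∈ 𝒮, LinearMap.rank ((S * T - T * S : X →L[ℂ] X) : X →ₗ[ℂ] X) ≤ 1)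
    (A B : X →L[ℂ] X) (hA : A ∈ 𝒮) (hB : B ∈ 𝒮)
    (y : X) (φ : X →L[ℂ] ℂ) (hy : y ≠ 0) (hφ : φ ≠ 0)
    (hAB : A * B - B * A = φ.smulRight y) :
    (Submodule.span ℂ (insert y {x | ∃ S ∈ 𝒮, x = S y})).topologicalClosure ≠ ⊥ ∧
    (∀ T ∈ 𝒮, ∀ x ∈ (Submodule.span ℂ (insert y {x | ∃ S ∈ 𝒮, x = S y})).topologicalClosure,
        T x ∈ (Submodule.span ℂ (insert y {x | ∃ S ∈ 𝒮, x = S y})).topologicalClosure) ∧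
    (Submodule.span ℂ (insert y {x | ∃ S ∈ 𝒮, x = S y})).topologicalClosure ≤ LinearMap.ker (φ : X →ₗ[ℂ] ℂ) ∧
    (Submodule.span ℂ (insert y {x | ∃ S ∈ 𝒮, x = S y})).topologicalClosure ≠ ⊤ := by
  set N := Submodule.span ℂ (insert y {x | ∃ S ∈ 𝒮, x = S y})
  have h𝒮 := isRankOneCommutatorSemigroup_image_coe hmul hrank
  have hAB' : ⁅(A : Module.End ℂ X), (B : Module.End ℂ X)⁆ =
      (φ : Module.Dual ℂ X).smulRight y := by
    rw [← ContinuousLinearMap.coe_smulRight, ← hAB]; rfl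
  have hM : N.topologicalClosure ≤ LinearMap.ker (φ : X →ₗ[ℂ] ℂ) := by
    refine N.topologicalClosure_minimal (span_le.mpr ?_) φ.isClosed_ker
    rintro x (rfl | ⟨S, hS, rfl⟩)
    · exact h𝒮.apply_eq_zero_of_lie_eq ⟨A, hA, rfl⟩ ⟨B, hB, rfl⟩ hAB'
    · exact h𝒮.apply_apply_eq_zero ⟨A, hA, rfl⟩ ⟨B, hB, rfl⟩ ⟨S, hS, rfl⟩ hAB'
  refine ⟨?_, fun T hT => N.topologicalClosure_le_comap T (span_le.mpr ?_), hM, fun h => hφ ?_⟩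
  · exact (Submodule.ne_bot_iff _).mpr
      ⟨y, N.le_topologicalClosure (subset_span (Set.mem_insert y _)), hy⟩
  · rintro x (rfl | ⟨S, hS, rfl⟩)
    · exact subset_span (Or.inr ⟨T, hT, rfl⟩)
    · exact subset_span (Or.inr ⟨T * S, hmul T hT S hS, rfl⟩)
  · ext x
    exact hM (h ▸ mem_top : x ∈ N.topologicalClosure)

theorem stmt_10 {X : Type*} [NormedAddCommGroup X] [NormedSpace ℂ X] [CompleteSpace X]
    (hdim : 2 ≤ Module.rank ℂ X)
    (𝒮 : Set (X →L[ℂ] X)) (hmul : ∀ S ∈ 𝒮, ∀ T ∈ 𝒮, S * T ∈ 𝒮)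
    (hrank : ∀ S ∈ 𝒮, ∀ T ∈ 𝒮, LinearMap.rank ((S * T - T * S : X →L[ℂ] X) : X →ₗ[ℂ] X) ≤ 1)
    (hnc : ∃ S ∈ 𝒮, ∃ T ∈ 𝒮, S * T ≠ T * S)
    (A B : X →L[ℂ] X) (hA : A ∈ 𝒮) (hB : B ∈ 𝒮)
    (y : X) (φ : X →L[ℂ] ℂ) (hy : y ≠ 0) (hφ : φ ≠ 0)
    (hAB : A * B - B * A = φ.smulRight y) :
    (Submodule.span ℂ (insert y {x | ∃ S ∈ 𝒮, x = S y})).topologicalClosure ≠ ⊥ ∧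
    (∀ T ∈ 𝒮, ∀ x ∈ (Submodule.span ℂ (insert y {x | ∃ S ∈ 𝒮, x = S y})).topologicalClosure,
        T x ∈ (Submodule.span ℂ (insert y {x | ∃ S ∈ 𝒮, x = S y})).topologicalClosure) ∧
    (Submodule.span ℂ (insert y {x | ∃ S ∈ 𝒮, x = S y})).topologicalClosure ≤ LinearMap.ker (φ : X →ₗ[ℂ] ℂ) ∧
    (Submodule.span ℂ (insert y {x | ∃ S ∈ 𝒮, x = S y})).topologicalClosure ≠ ⊤ :=
  stmt_10_general 𝒮 hmul hrank A B hA hB y φ hy hφ hAB
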